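/- arXiv:2007.12527 — 2 statements merged into one kernel-verified Lean document; each statement's English description precedes it below -/
import Mathlib

section
/- Let G' be obtained from a partial cube G with no Q_{d+1} pc-minor by an isometric expansion with respect to an isometric cover (G¹, G⁰, G²). Then G' has no Q_{d+1} pc-minor if and only if the VC-dimension of G⁰ is at most d − 1. -/
/-!
A set family has a `Q_k` pc-minor iff it shatters `k` coordinates: restrictions and contractions
never create shattered sets, and contracting every coordinate outside a shattered set leaves a
subcube. A set of coordinates of the expansion avoiding the new coordinate is shattered only if it
is shattered by `S`; one containing it is shattered iff `S0` shatters the rest. For the nontrivial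
half of the latter, take vertices of `S1` and `S2` agreeing on `X`: a geodesic of `S` between them
passes through `S0`, since every edge lies in `S1` or in `S2`, and every vertex of a hypercube
geodesic keeps the coordinates on which its endpoints agree.
-/

open Finset
open scoped Classical

variable {U : Type*}

/-- Hamming distance between two vertices of the hypercube `U → Bool`. -/
def hDist [Fintype U] [DecidableEq U] (x y : U → Bool) : ℕ :=
  (Finset.univ.filter fun i => x i ≠ y i).card

/-- The hypercube graph on `U → Bool`: two vertices are adjacent iff they differ
in exactly one coordinate. -/
def cubeGraph (U : Type*) [Fintype U] [DecidableEq U] : SimpleGraph (U → Bool) where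
  Adj x y := hDist x y = 1
  symm := by
    constructor
    intro x y h
    have hs : (Finset.univ.filter fun i => y i ≠ x i) =
        (Finset.univ.filter fun i => x i ≠ y i) := by
      apply Finset.filter_congr
      intro i _
      exact ne_comm
    simpa [hDist, hs] using h
  loopless := by
    constructor
    intro x h
    simp [hDist] at h

/-- Distance between `x` and `y` inside the subgraph of the hypercube induced by `A`
(`0` if one of them is not in `A`). -/
noncomputable def dIn [Fintype U] [DecidableEq U] (A : Set (U → Bool)) (x y : U → Bool) : ℕ :=
  if h : x ∈ A ∧ y ∈ A then ((cubeGraph U).induce A).dist ⟨x, h.1⟩ ⟨y, h.2⟩ else 0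

/-- A set of vertices of the hypercube is a partial cube if its induced graph is connected
and the induced graph distance coincides with the Hamming distance
(i.e. it is an isometric subgraph of the hypercube). -/
def IsPartialCube [Fintype U] [DecidableEq U] (A : Set (U → Bool)) : Prop :=
  ((cubeGraph U).induce A).Connected ∧ ∀ x ∈ A, ∀ y ∈ A, dIn A x y = hDist x y

/-- `A` shatters the coordinate set `X`. -/
def Shatters [Fintype U] [DecidableEq U] (A : Set (U → Bool)) (X : Finset U) : Prop :=
  ∀ g : U → Bool, ∃ a ∈ A, ∀ i ∈ X, a i = g i

/-- `A` strongly shatters `X`: it contains a full subcube over the coordinates `X`. -/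
def StronglyShatters [Fintype U] [DecidableEq U] (A : Set (U → Bool)) (X : Finset U) : Prop :=
  ∃ a : U → Bool, ∀ g : U → Bool, (fun i => if i ∈ X then g i else a i) ∈ A

/-- An ample set family: every shattered set is strongly shattered. -/
def IsAmple [Fintype U] [DecidableEq U] (A : Set (U → Bool)) : Prop :=
  ∀ X : Finset U, Shatters A X → StronglyShatters A X

/-- The pc-minor relation: `PCMinor S T` holds if `T` is obtained from `S` by a sequence of
restrictions to halfspaces and contractions of Θ-classes (a coordinate is contracted by
setting it to `false`). -/
inductive PCMinor {U : Type*} [DecidableEq U] : Set (U → Bool) → Set (U → Bool) → Prop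
  | refl (S : Set (U → Bool)) : PCMinor S S
  | restrict (S : Set (U → Bool)) (i : U) (b : Bool) (T : Set (U → Bool)) :
      PCMinor (S ∩ {f | f i = b}) T → PCMinor S T
  | contract (S : Set (U → Bool)) (i : U) (T : Set (U → Bool)) :
      PCMinor ((fun f => Function.update f i false) '' S) T → PCMinor S T

/-- `T` is a full subcube of dimension `k`. -/
def IsSubcube {U : Type*} [DecidableEq U] (T : Set (U → Bool)) (k : ℕ) : Prop :=
  ∃ (X : Finset U) (b : U → Bool), X.card = k ∧ T = {f | ∀ i ∉ X, f i = b i}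

/-- Extend a vertex of the cube on `U` to a vertex of the cube on `Option U`, using `b` as
the value of the new coordinate `none`. -/
def ext0 (f : U → Bool) (b : Bool) : Option U → Bool := fun o => o.elim b f

/-- An isometric cover `(S1, S0, S2)` of the partial cube `S`. -/
def IsIsoCover [Fintype U] [DecidableEq U] (S S1 S0 S2 : Set (U → Bool)) : Prop :=
  S1 ⊆ S ∧ S2 ⊆ S ∧ S1 ∪ S2 = S ∧ S0 = S1 ∩ S2 ∧ S0.Nonempty ∧
  IsPartialCube S1 ∧ IsPartialCube S2 ∧
  ∀ x ∈ S, ∀ y ∈ S, hDist x y = 1 → (x ∈ S1 ∧ y ∈ S1) ∨ (x ∈ S2 ∧ y ∈ S2)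

def zeroOn [DecidableEq U] (F : Finset U) (f : U → Bool) : U → Bool :=
  fun i => if i ∈ F then false else f i

lemma pcminor_image_zeroOn [DecidableEq U] (F : Finset U) (A : Set (U → Bool)) :
    PCMinor A (zeroOn F '' A) := by
  induction F using Finset.induction generalizing A with
  | empty =>
    have hid : zeroOn (∅ : Finset U) = id := by
      funext f i
      simp [zeroOn]
    rw [hid, Set.image_id]
    exact PCMinor.refl A
  | @insert a F _ ih =>
    refine PCMinor.contract A a _ ?_
    have hcomp : zeroOn (insert a F) '' A
        = zeroOn F '' ((fun f => Function.update f a false) '' A) := by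
      rw [Set.image_image]
      refine Set.image_congr fun f _ => funext fun i => ?_
      by_cases hiF : i ∈ F <;> by_cases hia : i = a <;>
        simp [zeroOn, Function.update, hiF, hia]
    rw [hcomp]
    exact ih _

def isoExpansion (S1 S2 : Set (U → Bool)) : Set (Option U → Bool) :=
  (fun f => ext0 f false) '' S1 ∪ (fun f => ext0 f true) '' S2

lemma mem_isoExpansion {S1 S2 : Set (U → Bool)} {a : Option U → Bool} :
    a ∈ isoExpansion S1 S2 ↔
      (a none = false ∧ (fun i => a (some i)) ∈ S1) ∨
        (a none = true ∧ (fun i => a (some i)) ∈ S2) := by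
  have hext : ext0 (fun i => a (some i)) (a none) = a := funext fun o => by cases o <;> rfl
  constructor
  · rintro (⟨f, hf, rfl⟩ | ⟨f, hf, rfl⟩)
    · exact Or.inl ⟨rfl, hf⟩
    · exact Or.inr ⟨rfl, hf⟩
  · rintro (⟨h0, h1⟩ | ⟨h0, h2⟩)
    · exact Or.inl ⟨_, h1, by rw [← h0]; exact hext⟩
    · exact Or.inr ⟨_, h2, by rw [← h0]; exact hext⟩

lemma apply_eq_of_hammingDist_add_eq {ι : Type*} {β : ι → Type*} [Fintype ι]
    [∀ i, DecidableEq (β i)] {u w v : ∀ i, β i}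
    (h : hammingDist u w + hammingDist w v = hammingDist u v) {i : ι} (hi : u i = v i) :
    w i = u i := by
  by_contra hne
  -- the triangle inequality holds coordinatewise, so equality of the sums is coordinatewise
  have hle : ∀ j ∈ univ, (if u j ≠ v j then 1 else 0) ≤
      (if u j ≠ w j then 1 else 0) + (if w j ≠ v j then 1 else 0) := by
    intro j _
    split_ifs <;> simp_all
  have hsum := (sum_eq_sum_iff_of_le hle).1
    (by simpa only [hammingDist, card_filter, ← sum_add_distrib] using h.symm) i (mem_univ i)
  have hwv : w i ≠ v i := hi ▸ hne
  simp [hi, hwv, Ne.symm hwv] at hsum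

theorem SimpleGraph.Walk.exists_mem_support_mem_inter {V : Type*} {G : SimpleGraph V}
    {P Q : Set V} (hPQ : ∀ x y, G.Adj x y → (x ∈ P ∧ y ∈ P) ∨ (x ∈ Q ∧ y ∈ Q))
    {u v : V} (p : G.Walk u v) (hu : u ∈ P) (hv : v ∈ Q) :
    ∃ w ∈ p.support, w ∈ P ∧ w ∈ Q := by
  induction p with
  | nil => exact ⟨_, SimpleGraph.Walk.start_mem_support _, hu, hv⟩
  | @cons a b c h p ih =>
    rcases hPQ a b h with ⟨-, hb⟩ | ⟨ha, -⟩
    · obtain ⟨w, hw, hwP, hwQ⟩ := ih hb hv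
      exact ⟨w, List.mem_cons_of_mem a hw, hwP, hwQ⟩
    · exact ⟨a, SimpleGraph.Walk.start_mem_support _, hu, ha⟩

section

variable [Fintype U] [DecidableEq U]

lemma hammingDist_le_length {A : Set (U → Bool)} {u v : A}
    (p : ((cubeGraph U).induce A).Walk u v) : hammingDist u.1 v.1 ≤ p.length := by
  induction p with
  | nil => simp
  | @cons a b c h p ih =>
    have hstep : hammingDist a.1 b.1 = 1 := h
    have := hammingDist_triangle a.1 b.1 c.1
    rw [SimpleGraph.Walk.length_cons]
    omega

lemma IsPartialCube.exists_walk_length_eq_hammingDist {A : Set (U → Bool)} (hA : IsPartialCube A)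
    {x y : U → Bool} (hx : x ∈ A) (hy : y ∈ A) :
    ∃ p : ((cubeGraph U).induce A).Walk ⟨x, hx⟩ ⟨y, hy⟩, p.length = hammingDist x y := by
  obtain ⟨p, hp⟩ := hA.1.exists_walk_length_eq_dist ⟨x, hx⟩ ⟨y, hy⟩
  have hdist := hA.2 x hx y hy
  rw [dIn, dif_pos ⟨hx, hy⟩] at hdist
  exact ⟨p, hp.trans hdist⟩

lemma hammingDist_add_eq_of_mem_support {A : Set (U → Bool)} {u v w : A}
    (p : ((cubeGraph U).induce A).Walk u v) (hp : p.length = hammingDist u.1 v.1)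
    (hw : w ∈ p.support) :
    hammingDist u.1 w.1 + hammingDist w.1 v.1 = hammingDist u.1 v.1 := by
  have hsplit := congrArg SimpleGraph.Walk.length (p.take_spec hw)
  rw [SimpleGraph.Walk.length_append] at hsplit
  have := hammingDist_le_length (p.takeUntil w hw)
  have := hammingDist_le_length (p.dropUntil w hw)
  have := hammingDist_triangle u.1 w.1 v.1
  omega

lemma IsIsoCover.exists_mem_agree {S S1 S0 S2 : Set (U → Bool)} (hpc : IsPartialCube S)
    (hcov : IsIsoCover S S1 S0 S2) {f1 f2 : U → Bool} (hf1 : f1 ∈ S1) (hf2 : f2 ∈ S2)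
    {X : Finset U} (hX : ∀ i ∈ X, f1 i = f2 i) : ∃ f0 ∈ S0, ∀ i ∈ X, f0 i = f1 i := by
  obtain ⟨hS1, hS2, -, rfl, -, -, -, hedge⟩ := hcov
  obtain ⟨p, hp⟩ := hpc.exists_walk_length_eq_hammingDist (hS1 hf1) (hS2 hf2)
  obtain ⟨w, hw, hw1, hw2⟩ := p.exists_mem_support_mem_inter (P := {x : S | x.1 ∈ S1})
    (Q := {x : S | x.1 ∈ S2}) (fun x y hxy => hedge x.1 x.2 y.1 y.2 hxy) hf1 hf2
  exact ⟨w.1, ⟨hw1, hw2⟩, fun i hi =>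
    apply_eq_of_hammingDist_add_eq (hammingDist_add_eq_of_mem_support p hp hw) (hX i hi)⟩

lemma Shatters.mono {A B : Set (U → Bool)} {X : Finset U} (h : Shatters A X) (hAB : A ⊆ B) :
    Shatters B X := fun g => (h g).imp fun _ ⟨ha, hm⟩ => ⟨hAB ha, hm⟩

lemma Shatters.subset {A : Set (U → Bool)} {X Y : Finset U} (h : Shatters A X) (hYX : Y ⊆ X) :
    Shatters A Y := fun g => (h g).imp fun _ ⟨ha, hm⟩ => ⟨ha, fun i hi => hm i (hYX hi)⟩

lemma Shatters.of_image_update {A : Set (U → Bool)} {X : Finset U} {i : U}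
    (h : Shatters ((fun f => Function.update f i false) '' A) X) : Shatters A X := by
  by_cases hiX : i ∈ X
  · obtain ⟨-, ⟨s, -, rfl⟩, hm⟩ := h (Function.update (fun _ => false) i true)
    simpa using hm i hiX
  · intro g
    obtain ⟨-, ⟨s, hs, rfl⟩, hm⟩ := h g
    refine ⟨s, hs, fun j hj => ?_⟩
    have hji : j ≠ i := ne_of_mem_of_not_mem hj hiX
    simpa [Function.update_of_ne hji] using hm j hj

lemma PCMinor.shatters {A T : Set (U → Bool)} {X : Finset U} (h : PCMinor A T)
    (hT : Shatters T X) : Shatters A X := by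
  induction h with
  | refl => exact hT
  | restrict _ _ _ _ _ ih => exact (ih hT).mono Set.inter_subset_left
  | contract _ _ _ _ ih => exact (ih hT).of_image_update

lemma IsSubcube.exists_shatters {T : Set (U → Bool)} {k : ℕ} (h : IsSubcube T k) :
    ∃ X : Finset U, X.card = k ∧ Shatters T X := by
  obtain ⟨X, b, hX, rfl⟩ := h
  exact ⟨X, hX, fun g => ⟨fun i => if i ∈ X then g i else b i, fun i hi => by simp [hi],
    fun i hi => by simp [hi]⟩⟩

lemma Shatters.exists_pcminor_isSubcube {A : Set (U → Bool)} {X : Finset U}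
    (h : Shatters A X) : ∃ T : Set (U → Bool), PCMinor A T ∧ IsSubcube T X.card := by
  refine ⟨zeroOn Xᶜ '' A, pcminor_image_zeroOn Xᶜ A, X, fun _ => false, rfl, ?_⟩
  ext f
  constructor
  · rintro ⟨s, -, rfl⟩ i hi
    simp [zeroOn, hi]
  · intro hf
    obtain ⟨a, ha, hm⟩ := h f
    refine ⟨a, ha, funext fun i => ?_⟩
    by_cases hi : i ∈ X
    · simp [zeroOn, hi, hm i hi]
    · simp [zeroOn, hi, hf i hi]

lemma exists_pcminor_isSubcube_iff {A : Set (U → Bool)} {k : ℕ} :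
    (∃ T, PCMinor A T ∧ IsSubcube T k) ↔ ∃ X : Finset U, X.card = k ∧ Shatters A X := by
  constructor
  · rintro ⟨T, hAT, hT⟩
    obtain ⟨X, hX, hTX⟩ := hT.exists_shatters
    exact ⟨X, hX, hAT.shatters hTX⟩
  · rintro ⟨X, rfl, hX⟩
    exact hX.exists_pcminor_isSubcube

lemma forall_shatters_card_lt_iff {A : Set (U → Bool)} {k : ℕ} :
    (∀ X : Finset U, Shatters A X → X.card < k) ↔
      ¬ ∃ X : Finset U, X.card = k ∧ Shatters A X := by
  constructor
  · rintro h ⟨X, rfl, hX⟩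
    exact lt_irrefl _ (h X hX)
  · intro h X hX
    by_contra! hkX
    obtain ⟨Y, hYX, hY⟩ := Finset.exists_subset_card_eq hkX
    exact h ⟨Y, hY, hX.subset hYX⟩

lemma Shatters.isoExpansion_insertNone {S1 S2 : Set (U → Bool)} {X : Finset U}
    (h : Shatters (S1 ∩ S2) X) : Shatters (isoExpansion S1 S2) (insertNone X) := by
  intro g
  obtain ⟨a, ⟨ha1, ha2⟩, hm⟩ := h fun i => g (some i)
  refine ⟨ext0 a (g none), ?_, ?_⟩
  · cases g none
    · exact mem_isoExpansion.2 (Or.inl ⟨rfl, ha1⟩)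
    · exact mem_isoExpansion.2 (Or.inr ⟨rfl, ha2⟩)
  · rintro (_ | i) hi
    · rfl
    · exact hm i (mem_insertNone.1 hi i rfl)

lemma Shatters.union_eraseNone_of_isoExpansion {S1 S2 : Set (U → Bool)}
    {X : Finset (Option U)} (h : Shatters (isoExpansion S1 S2) X) :
    Shatters (S1 ∪ S2) X.eraseNone := by
  intro g
  obtain ⟨a, ha, hm⟩ := h (ext0 g false)
  refine ⟨fun i => a (some i), ?_, fun i hi => hm (some i) (mem_eraseNone.1 hi)⟩
  rcases mem_isoExpansion.1 ha with ⟨-, h1⟩ | ⟨-, h2⟩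
  exacts [Or.inl h1, Or.inr h2]

lemma Shatters.eraseNone_of_isoExpansion {S S1 S0 S2 : Set (U → Bool)} (hpc : IsPartialCube S)
    (hcov : IsIsoCover S S1 S0 S2) {X : Finset (Option U)}
    (h : Shatters (isoExpansion S1 S2) X) (hX : none ∈ X) : Shatters S0 X.eraseNone := by
  intro g
  obtain ⟨a1, ha1, hm1⟩ := h (ext0 g false)
  obtain ⟨a2, ha2, hm2⟩ := h (ext0 g true)
  have hm1' : ∀ i ∈ X.eraseNone, a1 (some i) = g i := fun i hi => hm1 _ (mem_eraseNone.1 hi)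
  have hm2' : ∀ i ∈ X.eraseNone, a2 (some i) = g i := fun i hi => hm2 _ (mem_eraseNone.1 hi)
  have hf1 : (fun i => a1 (some i)) ∈ S1 := by
    simpa [hm1 none hX, ext0] using mem_isoExpansion.1 ha1
  have hf2 : (fun i => a2 (some i)) ∈ S2 := by
    simpa [hm2 none hX, ext0] using mem_isoExpansion.1 ha2
  obtain ⟨f0, hf0, hm0⟩ :=
    hcov.exists_mem_agree hpc hf1 hf2 fun i hi => (hm1' i hi).trans (hm2' i hi).symm
  exact ⟨f0, hf0, fun i hi => (hm0 i hi).trans (hm1' i hi)⟩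

lemma exists_shatters_isoExpansion_iff {S S1 S0 S2 : Set (U → Bool)} (hpc : IsPartialCube S)
    (hcov : IsIsoCover S S1 S0 S2) {k : ℕ}
    (hS : ¬ ∃ X : Finset U, X.card = k + 1 ∧ Shatters S X) :
    (∃ X : Finset (Option U), X.card = k + 1 ∧ Shatters (isoExpansion S1 S2) X) ↔
      ∃ X : Finset U, X.card = k ∧ Shatters S0 X := by
  have hS12 : S1 ∪ S2 = S := hcov.2.2.1
  have hS0 : S0 = S1 ∩ S2 := hcov.2.2.2.1
  constructor
  · rintro ⟨X, hcard, hX⟩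
    by_cases hnone : none ∈ X
    · exact ⟨X.eraseNone, by rw [card_eraseNone_of_mem hnone, hcard]; rfl,
        hX.eraseNone_of_isoExpansion hpc hcov hnone⟩
    · refine absurd ⟨X.eraseNone, by rw [card_eraseNone_of_not_mem hnone, hcard], ?_⟩ hS
      rw [← hS12]
      exact hX.union_eraseNone_of_isoExpansion
  · rintro ⟨X, rfl, hX⟩
    rw [hS0] at hX
    exact ⟨insertNone X, card_insertNone X, hX.isoExpansion_insertNone⟩

end

/-- Let `S'` be obtained from a partial cube `S` with no `Q_{d+1}` pc-minor
by an isometric expansion with respect to an isometric cover `(S1, S0, S2)`.  Then `S'` has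
no `Q_{d+1}` pc-minor if and only if the VC-dimension of `S0` is at most `d - 1`. -/
theorem stmt7 [Fintype U] [DecidableEq U] (S S1 S0 S2 : Set (U → Bool)) (d : ℕ)
    (hpc : IsPartialCube S) (hcov : IsIsoCover S S1 S0 S2)
    (hmin : ¬ ∃ T : Set (U → Bool), PCMinor S T ∧ IsSubcube T (d + 1)) :
    (¬ ∃ T : Set (Option U → Bool),
        PCMinor ((fun f => ext0 f false) '' S1 ∪ (fun f => ext0 f true) '' S2) T ∧
        IsSubcube T (d + 1)) ↔
      ∀ X : Finset U, Shatters S0 X → (X.card : ℤ) ≤ (d : ℤ) - 1 := by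
  rw [exists_pcminor_isSubcube_iff] at hmin ⊢
  change (¬ ∃ X, _ ∧ Shatters (isoExpansion S1 S2) X) ↔ _
  rw [exists_shatters_isoExpansion_iff hpc hcov hmin, ← forall_shatters_card_lt_iff]
  refine forall₂_congr fun X _ => ?_
  omega
end

section
/- For any covector X of a COM (U, L) and any tope Y of L, the composition X∘Y is a tope lying in the face F(X), and X∘Y is the gate of Y in the smallest subcube C(X) of {±1}^U containing F(X); consequently every face F(X) is a gated subgraph of the tope graph of L. -/
open Finset
open scoped Classical

variable {U : Type*}

/-- Composition of sign vectors: `(X ∘ Y) e = X e` if `X e ≠ 0`, else `Y e`. -/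
def comp (X Y : U → SignType) : U → SignType := fun e => if X e = 0 then Y e else X e

/-- The support of a sign vector. -/
def supp (X : U → SignType) : Set U := {e | X e ≠ 0}

/-- The separator of two sign vectors. -/
def sep [Fintype U] [DecidableEq U] (X Y : U → SignType) : Finset U :=
  Finset.univ.filter fun e => X e * Y e = -1

/-- A complex of oriented matroids: face symmetry and strong elimination. -/
structure IsCOM (L : Set (U → SignType)) : Prop where
  fs : ∀ X ∈ L, ∀ Y ∈ L, comp X (-Y) ∈ L
  se : ∀ X ∈ L, ∀ Y ∈ L, ∀ e : U, X e * Y e = -1 →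
      ∃ Z ∈ L, Z e = 0 ∧ ∀ f : U, X f * Y f ≠ -1 → Z f = comp X Y f

/-- An oriented matroid: composition, strong elimination and symmetry. -/
structure IsOM (L : Set (U → SignType)) : Prop where
  c : ∀ X ∈ L, ∀ Y ∈ L, comp X Y ∈ L
  se : ∀ X ∈ L, ∀ Y ∈ L, ∀ e : U, X e * Y e = -1 →
      ∃ Z ∈ L, Z e = 0 ∧ ∀ f : U, X f * Y f ≠ -1 → Z f = comp X Y f
  sym : ∀ X ∈ L, -X ∈ L

/-- A simple system of sign vectors. -/
def SimpleSV (L : Set (U → SignType)) : Prop :=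
  (∀ e : U, ∀ s : SignType, ∃ X ∈ L, X e = s) ∧
  ∀ e f : U, e ≠ f → (∃ X ∈ L, X e * X f = 1) ∧ (∃ Y ∈ L, Y e * Y f = -1)

/-- The topes of a system of sign vectors: the covectors with full support. -/
def Topes (L : Set (U → SignType)) : Set (U → SignType) := {X ∈ L | ∀ e, X e ≠ 0}

/-- Conversion of a (full support) sign vector to a vertex of the hypercube. -/
def tb (X : U → SignType) : U → Bool := fun e => decide (X e = 1)

/-- The vertex set of the tope graph inside the hypercube. -/
def TopeSet (L : Set (U → SignType)) : Set (U → Bool) := tb '' Topes L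

/-- The face of a covector `X`. -/
def face (L : Set (U → SignType)) (X : U → SignType) : Set (U → SignType) :=
  {Z | ∃ Y ∈ L, Z = comp X Y}

/-!
For two topes `T, T'` separated on at least two coordinates there is a tope strictly between
them: strong elimination at a separating coordinate `e` gives `Z` with `Z e = 0` agreeing with
`T` off the separator, and a suitable tope of the face of `Z` (one of `Z ∘ (-T)`, `Z ∘ (-T')`,
or, when `Z` vanishes on the whole separator, `Z ∘ V ∘ T` for a covector `V` supplied by
simplicity) lies strictly between `T` and `T'`. Induction on the Hamming distance then shows
that the tope graph is an isometric subgraph of the hypercube. Since `X ∘ Y` agrees with `Y` off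
`supp X` and with every tope of `C(X)` on `supp X`, it lies on a Hamming geodesic from `Y` to
each of them, which is the gate property.
-/

def IsBetween {β : Type*} (x y z : U → β) : Prop := ∀ i, y i = x i ∨ y i = z i

theorem IsBetween.symm {β : Type*} {x y z : U → β} (h : IsBetween x y z) : IsBetween z y x :=
  fun i => (h i).symm

section Hypercube

variable [Fintype U] [DecidableEq U]

def HasInteriorVertices (A : Set (U → Bool)) : Prop :=
  ∀ x ∈ A, ∀ y ∈ A, 1 < hDist x y → ∃ z ∈ A, z ≠ x ∧ z ≠ y ∧ IsBetween x z y

theorem hDist_eq_add_of_isBetween {x y z : U → Bool} (h : IsBetween x y z) :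
    hDist x z = hDist x y + hDist y z := by
  have hunion : (univ.filter fun i => x i ≠ z i) =
      (univ.filter fun i => x i ≠ y i) ∪ (univ.filter fun i => y i ≠ z i) := by
    ext i
    simp only [mem_filter, mem_union, mem_univ, true_and]
    rcases h i with h1 | h1 <;> rw [h1] <;> tauto
  have hdisj : Disjoint (univ.filter fun i => x i ≠ y i) (univ.filter fun i => y i ≠ z i) := by
    rw [disjoint_filter]
    rintro i - hxy hyz
    rcases h i with h1 | h1
    · exact hxy h1.symm
    · exact hyz h1
  rw [hDist, hDist, hDist, hunion, card_union_of_disjoint hdisj]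

theorem hDist_le_length {A : Set (U → Bool)} {a b : A}
    (p : ((cubeGraph U).induce A).Walk a b) : hDist a.1 b.1 ≤ p.length := by
  induction p with
  | nil => simp [hDist]
  | @cons u v w hadj q ih =>
    have huv : hDist u.1 v.1 = 1 := hadj
    calc hDist u.1 w.1 ≤ hDist u.1 v.1 + hDist v.1 w.1 := hammingDist_triangle _ _ _
      _ ≤ (SimpleGraph.Walk.cons hadj q).length := by
        rw [huv, SimpleGraph.Walk.length_cons]; omega

theorem exists_walk_length_eq_hDist {A : Set (U → Bool)} (hA : HasInteriorVertices A)
    (a b : A) : ∃ p : ((cubeGraph U).induce A).Walk a b, p.length = hDist a.1 b.1 := by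
  induction hn : hDist a.1 b.1 using Nat.strong_induction_on generalizing a b with
  | _ n ih =>
  rcases Nat.lt_trichotomy n 1 with h0 | rfl | h2
  · have hab : a = b := Subtype.ext (hammingDist_eq_zero.mp (by change hDist _ _ = 0; omega))
    subst hab
    exact ⟨.nil, hn ▸ (hammingDist_self _).symm⟩
  · exact ⟨SimpleGraph.Adj.toWalk hn, rfl⟩
  · obtain ⟨z, hz, hza, hzb, hbtw⟩ := hA a.1 a.2 b.1 b.2 (hn ▸ h2)
    have hsum := hDist_eq_add_of_isBetween hbtw
    have haz : 0 < hDist a.1 z := hammingDist_pos.mpr (Ne.symm hza)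
    have hzb' : 0 < hDist z b.1 := hammingDist_pos.mpr hzb
    obtain ⟨p, hp⟩ := ih (hDist a.1 z) (by omega) a ⟨z, hz⟩ rfl
    obtain ⟨q, hq⟩ := ih (hDist z b.1) (by omega) ⟨z, hz⟩ b rfl
    exact ⟨p.append q, by rw [SimpleGraph.Walk.length_append, hp, hq]; omega⟩

theorem dIn_eq_hDist {A : Set (U → Bool)} (hA : HasInteriorVertices A)
    {x y : U → Bool} (hx : x ∈ A) (hy : y ∈ A) : dIn A x y = hDist x y := by
  rw [dIn, dif_pos ⟨hx, hy⟩]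
  obtain ⟨p, hp⟩ := exists_walk_length_eq_hDist hA ⟨x, hx⟩ ⟨y, hy⟩
  obtain ⟨q, hq⟩ := SimpleGraph.Reachable.exists_walk_length_eq_dist ⟨p⟩
  exact le_antisymm (hp ▸ SimpleGraph.dist_le p) (hq ▸ hDist_le_length q)

end Hypercube

namespace SignType

theorem mul_eq_neg_one_of_ne : ∀ {a b : SignType}, a ≠ 0 → b ≠ 0 → a ≠ b → a * b = -1 := by
  decide

theorem mul_self_ne_neg_one : ∀ a : SignType, a * a ≠ -1 := by decide

theorem eq_or_eq_of_ne {a b c : SignType} :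
    a ≠ 0 → b ≠ 0 → c ≠ 0 → a ≠ b → c = a ∨ c = b := by
  cases a <;> cases b <;> cases c <;> decide

theorem eq_neg_of_ne : ∀ {a b : SignType}, a ≠ 0 → b ≠ 0 → a ≠ b → b = -a := by decide

theorem neg_ne_zero_of_ne_zero : ∀ {a : SignType}, a ≠ 0 → -a ≠ 0 := by decide

theorem neg_ne_self : ∀ {a : SignType}, a ≠ 0 → -a ≠ a := by decide

theorem eq_one_or_eq_neg_one : ∀ {a : SignType}, a ≠ 0 → a = 1 ∨ a = -1 := by decide

theorem eq_of_decide_eq_one_eq : ∀ {a b : SignType}, a ≠ 0 → b ≠ 0 →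
    decide (a = 1) = decide (b = 1) → a = b := by decide

end SignType

section COM

variable {L : Set (U → SignType)}

@[simp]
theorem comp_apply_of_eq_zero {X : U → SignType} (Y : U → SignType) {e : U} (h : X e = 0) :
    comp X Y e = Y e := if_pos h

@[simp]
theorem comp_apply_of_ne_zero {X : U → SignType} (Y : U → SignType) {e : U} (h : X e ≠ 0) :
    comp X Y e = X e := if_neg h

theorem comp_apply_ne_zero (X : U → SignType) {Y : U → SignType} {e : U} (h : Y e ≠ 0) :
    comp X Y e ≠ 0 := by
  by_cases hX : X e = 0 <;> simp [hX, h]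

theorem tb_injective_on {T T' : U → SignType} (hT : ∀ e, T e ≠ 0) (hT' : ∀ e, T' e ≠ 0)
    (h : tb T = tb T') : T = T' :=
  funext fun e => SignType.eq_of_decide_eq_one_eq (hT e) (hT' e) (congrFun h e)

/-- In a COM composition is a derived operation: `X ∘ Y = X ∘ -(X ∘ -Y)`. -/
theorem IsCOM.comp_mem (hL : IsCOM L) {X Y : U → SignType} (hX : X ∈ L) (hY : Y ∈ L) :
    comp X Y ∈ L := by
  have key : comp X (-(comp X (-Y))) = comp X Y := by
    funext e
    by_cases hx : X e = 0 <;> simp [hx]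
  exact key ▸ hL.fs X hX _ (hL.fs X hX Y hY)

theorem IsCOM.comp_mem_topes (hL : IsCOM L) {X Y : U → SignType} (hX : X ∈ L)
    (hY : Y ∈ Topes L) : comp X Y ∈ Topes L :=
  ⟨hL.comp_mem hX hY.1, fun _ => comp_apply_ne_zero X (hY.2 _)⟩

theorem isBetween_comp_of_eqOn {T T' Z V : U → SignType} (hT : ∀ e, T e ≠ 0)
    (hT' : ∀ e, T' e ≠ 0) (hZ : ∀ g, T g = T' g → Z g = T g) (hV : ∀ e, V e ≠ 0) :
    IsBetween T (comp Z V) T' := by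
  intro g
  by_cases hg : T g = T' g
  · left
    rw [comp_apply_of_ne_zero V (hZ g hg ▸ hT g), hZ g hg]
  · exact SignType.eq_or_eq_of_ne (hT g) (hT' g) (comp_apply_ne_zero Z (hV g)) hg


theorem comp_assoc (X Y Z : U → SignType) : comp (comp X Y) Z = comp X (comp Y Z) := by
  funext e
  by_cases hX : X e = 0 <;> by_cases hY : Y e = 0 <;> simp [comp, hX, hY]

theorem IsCOM.exists_tope_between_of_eq_on_separator (hL : IsCOM L) {T T' Z : U → SignType}
    (hT : T ∈ Topes L) (hT' : T' ∈ Topes L) (hZ : Z ∈ L) (hZT : ∀ g, T g = T' g → Z g = T g)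
    {e g : U} (hZe : Z e = 0) (hg : T g ≠ T' g) (hZg : Z g = T g) :
    ∃ M ∈ Topes L, M ≠ T ∧ M ≠ T' ∧ IsBetween T M T' := by
  have hnegT : ∀ e, (-T) e ≠ 0 := fun e => SignType.neg_ne_zero_of_ne_zero (hT.2 e)
  refine ⟨comp Z (-T), ⟨hL.fs Z hZ T hT.1, fun _ => comp_apply_ne_zero Z (hnegT _)⟩,
    fun h => ?_, fun h => ?_, isBetween_comp_of_eqOn hT.2 hT'.2 hZT hnegT⟩
  · have hMe := congrFun h e
    rw [comp_apply_of_eq_zero _ hZe] at hMe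
    exact SignType.neg_ne_self (hT.2 e) hMe
  · have hMg := congrFun h g
    rw [comp_apply_of_ne_zero _ (hZg ▸ hT.2 g), hZg] at hMg
    exact hg hMg

theorem IsCOM.exists_tope_between_of_vanishes_on_separator (hL : IsCOM L) (hs : SimpleSV L)
    {T T' Z : U → SignType} (hT : T ∈ Topes L) (hT' : T' ∈ Topes L) (hZ : Z ∈ L)
    (hZT : ∀ g, T g = T' g → Z g = T g) (hZsep : ∀ g, T g ≠ T' g → Z g = 0)
    {e f : U} (hef : e ≠ f) (he : T e ≠ T' e) (hf : T f ≠ T' f) :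
    ∃ M ∈ Topes L, M ≠ T ∧ M ≠ T' ∧ IsBetween T M T' := by
  have hTef : T e * T f ≠ 0 := mul_ne_zero (hT.2 e) (hT.2 f)
  obtain ⟨V, hV, hVef⟩ : ∃ V ∈ L, V e * V f = -(T e * T f) := by
    obtain ⟨⟨V₁, hV₁, h₁⟩, ⟨V₂, hV₂, h₂⟩⟩ := hs.2 e f hef
    rcases SignType.eq_one_or_eq_neg_one hTef with h | h
    · exact ⟨V₂, hV₂, by rw [h₂, h]⟩
    · exact ⟨V₁, hV₁, by rw [h₁, h, neg_neg]⟩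
  have hVef0 : V e * V f ≠ 0 := hVef ▸ SignType.neg_ne_zero_of_ne_zero hTef
  have hVT : ∀ g, comp V T g ≠ 0 := fun g => comp_apply_ne_zero V (hT.2 g)
  set M := comp Z (comp V T) with hM
  have hM_ne : ∀ N : U → SignType, N e * N f = T e * T f → M ≠ N := by
    intro N hN hMN
    rw [← hMN, hM, comp_apply_of_eq_zero _ (hZsep e he), comp_apply_of_eq_zero _ (hZsep f hf),
      comp_apply_of_ne_zero _ (left_ne_zero_of_mul hVef0),
      comp_apply_of_ne_zero _ (right_ne_zero_of_mul hVef0), hVef] at hN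
    exact SignType.neg_ne_self hTef hN
  have hT'ef : T' e * T' f = T e * T f := by
    rw [SignType.eq_neg_of_ne (hT.2 e) (hT'.2 e) he, SignType.eq_neg_of_ne (hT.2 f) (hT'.2 f) hf,
      neg_mul_neg]
  refine ⟨M, ⟨hL.comp_mem hZ (hL.comp_mem hV hT.1), fun g => comp_apply_ne_zero Z (hVT g)⟩,
    hM_ne T rfl, hM_ne T' hT'ef, isBetween_comp_of_eqOn hT.2 hT'.2 hZT hVT⟩

theorem IsCOM.exists_tope_between (hL : IsCOM L) (hs : SimpleSV L) {T T' : U → SignType}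
    (hT : T ∈ Topes L) (hT' : T' ∈ Topes L) {e f : U} (hef : e ≠ f) (he : T e ≠ T' e)
    (hf : T f ≠ T' f) : ∃ M ∈ Topes L, M ≠ T ∧ M ≠ T' ∧ IsBetween T M T' := by
  obtain ⟨Z, hZ, hZe, hZcomp⟩ :=
    hL.se T hT.1 T' hT'.1 e (SignType.mul_eq_neg_one_of_ne (hT.2 e) (hT'.2 e) he)
  have hZT : ∀ g, T g = T' g → Z g = T g := by
    intro g hg
    rw [hZcomp g (by rw [← hg]; exact SignType.mul_self_ne_neg_one _),
      comp_apply_of_ne_zero _ (hT.2 g)]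
  by_cases hsep : ∃ g, T g ≠ T' g ∧ Z g ≠ 0
  · obtain ⟨g, hg, hZg⟩ := hsep
    rcases SignType.eq_or_eq_of_ne (hT.2 g) (hT'.2 g) hZg hg with hZg | hZg
    · exact hL.exists_tope_between_of_eq_on_separator hT hT' hZ hZT hZe hg hZg
    · obtain ⟨M, hM, hMT', hMT, hbtw⟩ := hL.exists_tope_between_of_eq_on_separator hT' hT hZ
        (fun g hg => (hZT g hg.symm).trans hg.symm) hZe (Ne.symm hg) hZg
      exact ⟨M, hM, hMT, hMT', hbtw.symm⟩
  · push Not at hsep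
    exact hL.exists_tope_between_of_vanishes_on_separator hs hT hT' hZ hZT hsep hef he hf

variable [Fintype U] [DecidableEq U]

theorem IsCOM.dIn_topeSet_eq_hDist (hL : IsCOM L) (hs : SimpleSV L) {T T' : U → SignType}
    (hT : T ∈ Topes L) (hT' : T' ∈ Topes L) :
    dIn (TopeSet L) (tb T) (tb T') = hDist (tb T) (tb T') := by
  refine dIn_eq_hDist ?_ ⟨T, hT, rfl⟩ ⟨T', hT', rfl⟩
  rintro _ ⟨S, hS, rfl⟩ _ ⟨S', hS', rfl⟩ h
  obtain ⟨e, he, f, hf, hef⟩ := one_lt_card.mp h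
  simp only [mem_filter, mem_univ, true_and] at he hf
  obtain ⟨M, hM, hMS, hMS', hbtw⟩ :=
    hL.exists_tope_between hs hS hS' hef (fun h => he (by simp [tb, h]))
      (fun h => hf (by simp [tb, h]))
  refine ⟨tb M, ⟨M, hM, rfl⟩, mt (tb_injective_on hM.2 hS.2) hMS,
    mt (tb_injective_on hM.2 hS'.2) hMS', fun i => ?_⟩
  rcases hbtw i with h | h <;> simp [tb, h]

theorem IsCOM.dIn_topeSet_eq_add_of_isBetween (hL : IsCOM L) (hs : SimpleSV L)
    {T M T' : U → SignType} (hT : T ∈ Topes L) (hM : M ∈ Topes L) (hT' : T' ∈ Topes L)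
    (hbtw : IsBetween T M T') :
    dIn (TopeSet L) (tb T) (tb T') =
      dIn (TopeSet L) (tb T) (tb M) + dIn (TopeSet L) (tb M) (tb T') := by
  rw [hL.dIn_topeSet_eq_hDist hs hT hT', hL.dIn_topeSet_eq_hDist hs hT hM,
    hL.dIn_topeSet_eq_hDist hs hM hT']
  refine hDist_eq_add_of_isBetween fun i => ?_
  rcases hbtw i with h | h <;> simp [tb, h]

end COM

theorem isBetween_comp {X Y Z : U → SignType} (hZ : ∀ e, X e ≠ 0 → Z e = X e) :
    IsBetween Y (comp X Y) Z := by
  intro e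
  by_cases hX : X e = 0
  · exact .inl (comp_apply_of_eq_zero Y hX)
  · exact .inr ((comp_apply_of_ne_zero Y hX).trans (hZ e hX).symm)

/-- For a covector `X` and a tope `Y` of a (simple) COM, `X ∘ Y` is a tope
lying in the face `F(X)`, it is the gate of `Y` in the smallest cube `C(X)` containing
`F(X)` (whose topes are the topes agreeing with `X` on the support of `X`); consequently
every face `F(X)` is a gated subgraph of the tope graph. -/
theorem stmt10 [Fintype U] [DecidableEq U] (L : Set (U → SignType))
    (hcom : IsCOM L) (hsimple : SimpleSV L)
    (X : U → SignType) (hX : X ∈ L) (Y : U → SignType) (hY : Y ∈ Topes L) :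
    comp X Y ∈ Topes L ∧ comp X Y ∈ face L X ∧
    (∀ Z ∈ Topes L, (∀ e, X e ≠ 0 → Z e = X e) →
      dIn (TopeSet L) (tb Y) (tb Z) =
        dIn (TopeSet L) (tb Y) (tb (comp X Y)) +
          dIn (TopeSet L) (tb (comp X Y)) (tb Z)) ∧
    (∀ W ∈ Topes L, ∃ g ∈ Topes L, g ∈ face L X ∧
      ∀ Z ∈ Topes L, Z ∈ face L X →
        dIn (TopeSet L) (tb W) (tb Z) =
          dIn (TopeSet L) (tb W) (tb g) + dIn (TopeSet L) (tb g) (tb Z)) := by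
  have gate : ∀ W ∈ Topes L, ∀ Z ∈ Topes L, (∀ e, X e ≠ 0 → Z e = X e) →
      dIn (TopeSet L) (tb W) (tb Z) =
        dIn (TopeSet L) (tb W) (tb (comp X W)) + dIn (TopeSet L) (tb (comp X W)) (tb Z) :=
    fun W hW Z hZ hZX =>
      hcom.dIn_topeSet_eq_add_of_isBetween hsimple hW (hcom.comp_mem_topes hX hW) hZ
        (isBetween_comp hZX)
  refine ⟨hcom.comp_mem_topes hX hY, ⟨Y, hY.1, rfl⟩, gate Y hY, fun W hW => ?_⟩
  refine ⟨comp X W, hcom.comp_mem_topes hX hW, ⟨W, hW.1, rfl⟩, ?_⟩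
  rintro Z hZ ⟨V, -, rfl⟩
  exact gate W hW _ hZ fun e he => comp_apply_of_ne_zero V he
end
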